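/- In the algebra B_2 = Q⟨⟨X,Y⟩⟩/⟨X^2, Y^2⟩, modulo the additional two-sided ideal generated by the element w = (XY)^2 - (YX)^2 Y + r(XY)^3 - r^2 (YX)^3 - 2 r^2 (YX)^3 Y (for a fixed positive integer r), the elements (YX)^2 Y, (XY)^2 X, and (XY)^2 all vanish; consequently the ideal generated by w equals the ideal generated by (XY)^2, and the quotient B_2/⟨(XY)^2⟩ is an 8-dimensional Q-vector space with basis 1, X, Y, XY, YX, XYX, YXY, (YX)^2. -/

import Mathlib

/- A faithful concrete model of `B₂ = ℚ⟨⟨X,Y⟩⟩/⟨X²,Y²⟩`, the quotient of the formal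
power series algebra in two noncommuting variables X, Y by the two-sided ideal
generated by X² and Y².  `B₂` has topological ℚ-basis the alternating words
`1, X, Y, XY, YX, XYX, YXY, …`.  Sending `X ↦ u·E₀₁`, `Y ↦ u·E₁₀` in the 2×2
matrices over `ℚ[[u]]` identifies `B₂` with the subalgebra of matrices
`[[f, g], [h, e]]` where `f, e` are even power series with the same constant term
and `g, h` are odd power series; a word of length `n` corresponds to a matrix with
single entry `u^n` (e.g. `(XY)^k ↦ u^{2k}·E₀₀`, `(XY)^k X ↦ u^{2k+1}·E₀₁`). -/

namespace B2Model

open PowerSeries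

abbrev R := PowerSeries ℚ
abbrev A := Matrix (Fin 2) (Fin 2) R

private lemma parity_odd {p q : ℕ} (hn : Odd (p + q)) :
    (Odd p ∧ Even q) ∨ (Even p ∧ Odd q) := by
  rcases Nat.even_or_odd p with hp | hp <;> rcases Nat.even_or_odd q with hq | hq <;>
    simp [Nat.even_iff, Nat.odd_iff] at * <;> omega

private lemma parity_even {p q : ℕ} (hn : Even (p + q)) :
    (Even p ∧ Even q) ∨ (Odd p ∧ Odd q) := by
  rcases Nat.even_or_odd p with hp | hp <;> rcases Nat.even_or_odd q with hq | hq <;>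
    simp [Nat.even_iff, Nat.odd_iff] at * <;> omega

/-- The defining conditions: diagonal entries even with equal constant terms,
off-diagonal entries odd. -/
def cond (M : A) : Prop :=
  (∀ n, Odd n → coeff n (M 0 0) = 0) ∧
  (∀ n, Odd n → coeff n (M 1 1) = 0) ∧
  (∀ n, Even n → coeff n (M 0 1) = 0) ∧
  (∀ n, Even n → coeff n (M 1 0) = 0) ∧
  constantCoeff (M 0 0) = constantCoeff (M 1 1)

private lemma coeff_mul_zero_left {φ ψ : R} {n : ℕ}
    (h : ∀ p q : ℕ, p + q = n → coeff p φ = 0 ∨ coeff q ψ = 0) :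
    coeff n (φ * ψ) = 0 := by
  rw [PowerSeries.coeff_mul]
  refine Finset.sum_eq_zero fun pq hpq => ?_
  rcases h pq.1 pq.2 (Finset.HasAntidiagonal.mem_antidiagonal.mp hpq) with h0 | h0 <;>
    simp [h0]

/-- The model of `B₂` as a subalgebra of `M₂(ℚ[[u]])`. -/
noncomputable def S : Subalgebra ℚ A where
  carrier := {M | cond M}
  zero_mem' := by simp [cond]
  add_mem' := by
    rintro M N ⟨h1, h2, h3, h4, h5⟩ ⟨g1, g2, g3, g4, g5⟩
    exact ⟨fun n hn => by simp [Matrix.add_apply, h1 n hn, g1 n hn],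
      fun n hn => by simp [Matrix.add_apply, h2 n hn, g2 n hn],
      fun n hn => by simp [Matrix.add_apply, h3 n hn, g3 n hn],
      fun n hn => by simp [Matrix.add_apply, h4 n hn, g4 n hn],
      by simp [Matrix.add_apply, h5, g5]⟩
  one_mem' := by
    refine ⟨fun n hn => ?_, fun n hn => ?_, fun n hn => ?_, fun n hn => ?_, ?_⟩ <;>
      simp [Matrix.one_apply, PowerSeries.coeff_one]
    · intro h; subst h; simp [Nat.odd_iff] at hn
    · intro h; subst h; simp [Nat.odd_iff] at hn
  mul_mem' := by
    rintro M N ⟨h1, h2, h3, h4, h5⟩ ⟨g1, g2, g3, g4, g5⟩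
    have key : ∀ (φ ψ : R) (n : ℕ),
        ((∀ m, Odd m → coeff m φ = 0) ∧ (∀ m, Odd m → coeff m ψ = 0) ∧ Odd n) ∨
        ((∀ m, Even m → coeff m φ = 0) ∧ (∀ m, Even m → coeff m ψ = 0) ∧ Odd n) ∨
        ((∀ m, Odd m → coeff m φ = 0) ∧ (∀ m, Even m → coeff m ψ = 0) ∧ Even n) ∨
        ((∀ m, Even m → coeff m φ = 0) ∧ (∀ m, Odd m → coeff m ψ = 0) ∧ Even n) →
        coeff n (φ * ψ) = 0 := by
      intro φ ψ n h
      apply coeff_mul_zero_left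
      intro p q hpq
      rcases h with ⟨hφ, hψ, hn⟩ | ⟨hφ, hψ, hn⟩ | ⟨hφ, hψ, hn⟩ | ⟨hφ, hψ, hn⟩ <;>
        subst hpq
      · rcases parity_odd hn with ⟨hp, hq⟩ | ⟨hp, hq⟩
        · exact Or.inl (hφ _ hp)
        · exact Or.inr (hψ _ hq)
      · rcases parity_odd hn with ⟨hp, hq⟩ | ⟨hp, hq⟩
        · exact Or.inr (hψ _ hq)
        · exact Or.inl (hφ _ hp)
      · rcases parity_even hn with ⟨hp, hq⟩ | ⟨hp, hq⟩
        · exact Or.inr (hψ _ hq)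
        · exact Or.inl (hφ _ hp)
      · rcases parity_even hn with ⟨hp, hq⟩ | ⟨hp, hq⟩
        · exact Or.inl (hφ _ hp)
        · exact Or.inr (hψ _ hq)
    refine ⟨fun n hn => ?_, fun n hn => ?_, fun n hn => ?_, fun n hn => ?_, ?_⟩
    · rw [Matrix.mul_apply, Fin.sum_univ_two, map_add]
      rw [key _ _ n (Or.inl ⟨h1, g1, hn⟩), key _ _ n (Or.inr (Or.inl ⟨h3, g4, hn⟩)),
        add_zero]
    · rw [Matrix.mul_apply, Fin.sum_univ_two, map_add]
      rw [key _ _ n (Or.inr (Or.inl ⟨h4, g3, hn⟩)), key _ _ n (Or.inl ⟨h2, g2, hn⟩),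
        add_zero]
    · rw [Matrix.mul_apply, Fin.sum_univ_two, map_add]
      rw [key _ _ n (Or.inr (Or.inr (Or.inl ⟨h1, g3, hn⟩))),
        key _ _ n (Or.inr (Or.inr (Or.inr ⟨h3, g2, hn⟩))), add_zero]
    · rw [Matrix.mul_apply, Fin.sum_univ_two, map_add]
      rw [key _ _ n (Or.inr (Or.inr (Or.inr ⟨h4, g1, hn⟩))),
        key _ _ n (Or.inr (Or.inr (Or.inl ⟨h2, g4, hn⟩))), add_zero]
    · have e01 : constantCoeff (M 0 1) = 0 := by
        simpa using h3 0 (by simp)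
      have e10' : constantCoeff (N 1 0) = 0 := by
        simpa using g4 0 (by simp)
      have e10 : constantCoeff (M 1 0) = 0 := by
        simpa using h4 0 (by simp)
      have e01' : constantCoeff (N 0 1) = 0 := by
        simpa using g3 0 (by simp)
      rw [Matrix.mul_apply, Fin.sum_univ_two, Matrix.mul_apply, Fin.sum_univ_two,
        map_add, map_add, map_mul, map_mul, map_mul, map_mul, e01, e10, e10', e01',
        h5, g5]
      ring
  algebraMap_mem' := by
    intro q
    refine ⟨fun n hn => ?_, fun n hn => ?_, fun n hn => ?_, fun n hn => ?_, ?_⟩ <;>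
      simp [Matrix.algebraMap_matrix_apply, PowerSeries.coeff_C, PowerSeries.algebraMap_apply]
    · intro h; subst h; simp [Nat.odd_iff] at hn
    · intro h; subst h; simp [Nat.odd_iff] at hn

/-- The matrix representing the generator `X`. -/
noncomputable def Xm : A := !![0, PowerSeries.X; 0, 0]

/-- The matrix representing the generator `Y`. -/
noncomputable def Ym : A := !![0, 0; PowerSeries.X, 0]

lemma Xm_mem : Xm ∈ S := by
  refine ⟨fun n hn => ?_, fun n hn => ?_, fun n hn => ?_, fun n hn => ?_, ?_⟩ <;>
    simp [Xm, PowerSeries.coeff_X]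
  intro h; subst h; simp [Nat.even_iff] at hn

lemma Ym_mem : Ym ∈ S := by
  refine ⟨fun n hn => ?_, fun n hn => ?_, fun n hn => ?_, fun n hn => ?_, ?_⟩ <;>
    simp [Ym, PowerSeries.coeff_X]
  intro h; subst h; simp [Nat.even_iff] at hn

/-- The generator `X` of `B₂`. -/
noncomputable def x : S := ⟨Xm, Xm_mem⟩

/-- The generator `Y` of `B₂`. -/
noncomputable def y : S := ⟨Ym, Ym_mem⟩

lemma x_sq : x * x = 0 := by
  apply Subtype.ext
  show Xm * Xm = 0
  simp [Xm]
  ext i j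
  fin_cases i <;> fin_cases j <;> simp [Matrix.mul_apply, Fin.sum_univ_two]

end B2Model

/- STATEMENT 18: In `B₂ = ℚ⟨⟨X,Y⟩⟩/⟨X²,Y²⟩`, let
   `w = (XY)² - (YX)²Y + r(XY)³ - r²(YX)³ - 2r²(YX)³Y` (r a fixed positive integer).
   Then `(YX)²Y`, `(XY)²X` and `(XY)²` all lie in the two-sided ideal generated by `w`;
   consequently `⟨w⟩ = ⟨(XY)²⟩`, and the quotient `B₂/⟨(XY)²⟩` is an 8-dimensional
   ℚ-vector space with basis `1, X, Y, XY, YX, XYX, YXY, (YX)²` (every element is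
   congruent mod `⟨(XY)²⟩` to a unique ℚ-linear combination of these monomials). -/

namespace Stmt18

open B2Model

noncomputable def w (r : ℕ) : ↥S :=
  (x * y) ^ 2 - (y * x) ^ 2 * y + (r : ↥S) * (x * y) ^ 3
    - (r : ↥S) ^ 2 * (y * x) ^ 3 - 2 * (r : ↥S) ^ 2 * ((y * x) ^ 3 * y)

/-- The eight monomials `1, X, Y, XY, YX, XYX, YXY, (YX)²`. -/
noncomputable def e : Fin 8 → ↥S :=
  ![1, x, y, x * y, y * x, x * y * x, y * x * y, (y * x) ^ 2]

/-! Multiplying `w` by `Y` on the right kills everything but `-r²(YX)³Y`, and on the left gives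
`(YX)²Y + r(YX)³Y`; both only use `Y² = 0`. As `r` is invertible over `ℚ`, the words `(YX)³Y`,
`(YX)²Y`, hence `(XY)³ = X(YX)²Y` and `(YX)³ = (YX)²YX` lie in `⟨w⟩`, and then so does
`(XY)² = w + (YX)²Y - r(XY)³ + r²(YX)³ + 2r²(YX)³Y`. Every term of `w` is a multiple of `(XY)²`.

In the matrix model `(XY)² = u⁴E₀₀`, and `⟨(XY)²⟩` consists of the elements whose `(i, j)` entry
is divisible by `u ^ (4 + i + j)`. By parity, such an element is determined modulo `⟨(XY)²⟩` by
eight coefficients, which are exactly its coordinates in `1, X, Y, XY, YX, XYX, YXY, (YX)²`. -/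

section Relator

variable {α : Type*} [Ring α]

lemma _root_.TwoSidedIdeal.mem_of_isUnit_mul_mem (I : TwoSidedIdeal α) {a b : α}
    (ha : IsUnit a) (h : a * b ∈ I) : b ∈ I := by
  obtain ⟨u, rfl⟩ := ha
  simpa using I.mul_mem_left (↑u⁻¹ : α) _ h

def relator (x y c : α) : α :=
  (x * y) ^ 2 - (y * x) ^ 2 * y + c * (x * y) ^ 3
    - c ^ 2 * (y * x) ^ 3 - 2 * c ^ 2 * ((y * x) ^ 3 * y)

variable {x y c : α}

lemma relator_mul_of_mul_self_eq_zero (hy : y * y = 0) :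
    relator x y c * y = -(c ^ 2 * ((y * x) ^ 3 * y)) := by
  simp [relator, sub_mul, add_mul, mul_assoc, pow_succ, hy]

lemma mul_relator_of_mul_self_eq_zero (hy : y * y = 0) (hc : Commute y c) :
    y * relator x y c = (y * x) ^ 2 * y + c * ((y * x) ^ 3 * y) := by
  have hyy (a : α) : y * (y * a) = 0 := by rw [← mul_assoc, hy, zero_mul]
  simp [relator, mul_sub, mul_add, mul_assoc, hc.left_comm,
    (Commute.ofNat_right y 2).left_comm, pow_succ, hyy]

lemma pow_three_mul_mem_span_relator (hy : y * y = 0) (hcu : IsUnit c) :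
    (y * x) ^ 3 * y ∈ TwoSidedIdeal.span {relator x y c} := by
  set I := TwoSidedIdeal.span {relator x y c}
  refine I.mem_of_isUnit_mul_mem (hcu.pow 2) (neg_mem_iff.mp ?_)
  rw [← relator_mul_of_mul_self_eq_zero hy]
  exact I.mul_mem_right _ _ (TwoSidedIdeal.subset_span rfl)

lemma sq_mul_mem_span_relator (hy : y * y = 0) (hc : Commute y c) (hcu : IsUnit c) :
    (y * x) ^ 2 * y ∈ TwoSidedIdeal.span {relator x y c} := by
  set I := TwoSidedIdeal.span {relator x y c}
  have h : (y * x) ^ 2 * y = y * relator x y c - c * ((y * x) ^ 3 * y) := by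
    rw [mul_relator_of_mul_self_eq_zero hy hc, add_sub_cancel_right]
  rw [h]
  exact I.sub_mem (I.mul_mem_left _ _ (TwoSidedIdeal.subset_span rfl))
    (I.mul_mem_left _ _ (pow_three_mul_mem_span_relator hy hcu))

lemma sq_mem_span_relator (hy : y * y = 0) (hc : Commute y c) (hcu : IsUnit c) :
    (x * y) ^ 2 ∈ TwoSidedIdeal.span {relator x y c} := by
  set I := TwoSidedIdeal.span {relator x y c}
  have h1 : (y * x) ^ 2 * y ∈ I := sq_mul_mem_span_relator hy hc hcu
  have hxy : (x * y) ^ 3 ∈ I := by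
    convert I.mul_mem_left x _ h1 using 1; noncomm_ring
  have hyx : (y * x) ^ 3 ∈ I := by
    convert I.mul_mem_right _ x h1 using 1; noncomm_ring
  have h : (x * y) ^ 2 = relator x y c + (y * x) ^ 2 * y - c * (x * y) ^ 3
      + c ^ 2 * (y * x) ^ 3 + 2 * c ^ 2 * ((y * x) ^ 3 * y) := by
    rw [relator]; abel
  rw [h]
  exact I.add_mem (I.add_mem (I.sub_mem (I.add_mem (TwoSidedIdeal.subset_span rfl) h1)
    (I.mul_mem_left _ _ hxy)) (I.mul_mem_left _ _ hyx))
    (I.mul_mem_left _ _ (pow_three_mul_mem_span_relator hy hcu))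

lemma relator_mem_span_sq : relator x y c ∈ TwoSidedIdeal.span {(x * y) ^ 2} := by
  set I := TwoSidedIdeal.span {(x * y) ^ 2}
  have h : (x * y) ^ 2 ∈ I := TwoSidedIdeal.subset_span rfl
  have h1 : (y * x) ^ 2 * y ∈ I := by
    convert I.mul_mem_left y _ h using 1; noncomm_ring
  have h2 : (x * y) ^ 3 ∈ I := by
    convert I.mul_mem_right _ (x * y) h using 1; noncomm_ring
  have h3 : (y * x) ^ 3 ∈ I := by
    convert I.mul_mem_right _ x h1 using 1; noncomm_ring
  have h4 : (y * x) ^ 3 * y ∈ I := by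
    convert I.mul_mem_right _ (x * y) h1 using 1; noncomm_ring
  exact I.sub_mem (I.sub_mem (I.add_mem (I.sub_mem h h1) (I.mul_mem_left _ _ h2))
    (I.mul_mem_left _ _ h3)) (I.mul_mem_left _ _ h4)

lemma span_relator_eq (hy : y * y = 0) (hc : Commute y c) (hcu : IsUnit c) :
    TwoSidedIdeal.span {relator x y c} = TwoSidedIdeal.span {(x * y) ^ 2} :=
  le_antisymm (TwoSidedIdeal.span_le.mpr (Set.singleton_subset_iff.mpr relator_mem_span_sq))
    (TwoSidedIdeal.span_le.mpr (Set.singleton_subset_iff.mpr (sq_mem_span_relator hy hc hcu)))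

end Relator

open PowerSeries

local notation "u" => (PowerSeries.X : R)

lemma coe_x : (x : A) = !![0, u; 0, 0] := rfl
lemma coe_y : (y : A) = !![0, 0; u, 0] := rfl

lemma y_mul_self : y * y = 0 := by
  ext1; ext i j : 1; fin_cases i <;> fin_cases j <;> simp [coe_y, Matrix.mul_apply]

lemma coe_xy : ((x * y : S) : A) = !![u ^ 2, 0; 0, 0] := by
  ext i j : 1; fin_cases i <;> fin_cases j <;> simp [coe_x, coe_y, Matrix.mul_apply, sq]

lemma coe_yx : ((y * x : S) : A) = !![0, 0; 0, u ^ 2] := by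
  ext i j : 1; fin_cases i <;> fin_cases j <;> simp [coe_x, coe_y, Matrix.mul_apply, sq]

lemma coe_xyx : ((x * y * x : S) : A) = !![0, u ^ 3; 0, 0] := by
  ext i j : 1; fin_cases i <;> fin_cases j <;> simp [coe_xy, coe_x, Matrix.mul_apply, pow_succ]

lemma coe_yxy : ((y * x * y : S) : A) = !![0, 0; u ^ 3, 0] := by
  ext i j : 1; fin_cases i <;> fin_cases j <;> simp [coe_yx, coe_y, Matrix.mul_apply, pow_succ]

lemma coe_xy_sq : (((x * y) ^ 2 : S) : A) = !![u ^ 4, 0; 0, 0] := by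
  ext i j : 1; fin_cases i <;> fin_cases j <;> simp [coe_xy, sq, Matrix.mul_apply]; ring

lemma coe_yx_sq : (((y * x) ^ 2 : S) : A) = !![0, 0; 0, u ^ 4] := by
  ext i j : 1; fin_cases i <;> fin_cases j <;> simp [coe_yx, sq, Matrix.mul_apply]; ring

lemma coe_yx_cube : (((y * x) ^ 3 : S) : A) = !![0, 0; 0, u ^ 6] := by
  ext i j : 1; fin_cases i <;> fin_cases j <;> simp [coe_yx, pow_succ, Matrix.mul_apply]; ring

lemma X_dvd_apply_of_ne (M : S) {i j : Fin 2} (h : i ≠ j) : u ∣ (M : A) i j := by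
  obtain ⟨-, -, h01, h10, -⟩ := M.2
  rw [X_dvd_iff, ← coeff_zero_eq_constantCoeff_apply]
  fin_cases i <;> fin_cases j
  exacts [absurd rfl h, h01 0 .zero, h10 0 .zero, absurd rfl h]

lemma X_pow_dvd_mul_apply_of_left (n : ℕ) (a b : S)
    (hb : ∀ k j : Fin 2, u ^ (n + k + j) ∣ (b : A) k j) (i j : Fin 2) :
    u ^ (n + i + j) ∣ ((a * b : S) : A) i j := by
  rw [MulMemClass.coe_mul, Matrix.mul_apply, Fin.sum_univ_two]
  fin_cases i
  · exact dvd_add (dvd_mul_of_dvd_right (hb 0 j) _)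
      (dvd_mul_of_dvd_right ((pow_dvd_pow _ (by simp)).trans (hb 1 j)) _)
  · refine dvd_add ?_ (dvd_mul_of_dvd_right (hb 1 j) _)
    rw [show n + 1 + j = 1 + (n + 0 + j) by simp; omega, pow_add, pow_one]
    exact mul_dvd_mul (X_dvd_apply_of_ne a (by decide)) (hb 0 j)

lemma X_pow_dvd_mul_apply_of_right (n : ℕ) (a b : S)
    (ha : ∀ i k : Fin 2, u ^ (n + i + k) ∣ (a : A) i k) (i j : Fin 2) :
    u ^ (n + i + j) ∣ ((a * b : S) : A) i j := by
  rw [MulMemClass.coe_mul, Matrix.mul_apply, Fin.sum_univ_two]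
  fin_cases j
  · exact dvd_add (dvd_mul_of_dvd_left (ha i 0) _)
      (dvd_mul_of_dvd_left ((pow_dvd_pow _ (by simp)).trans (ha i 1)) _)
  · refine dvd_add ?_ (dvd_mul_of_dvd_left (ha i 1) _)
    rw [show n + i + 1 = (n + i + 0) + 1 by simp, pow_add, pow_one]
    exact mul_dvd_mul (ha i 0) (X_dvd_apply_of_ne b (by decide))

noncomputable def orderIdeal (n : ℕ) : TwoSidedIdeal S :=
  TwoSidedIdeal.mk' {M | ∀ i j : Fin 2, u ^ (n + i + j) ∣ (M : A) i j}
    (fun _ _ => dvd_zero _)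
    (fun ha hb i j => dvd_add (ha i j) (hb i j))
    (fun ha i j => (dvd_neg).mpr (ha i j))
    (fun hb => X_pow_dvd_mul_apply_of_left n _ _ hb)
    (fun ha => X_pow_dvd_mul_apply_of_right n _ _ ha)

lemma mem_orderIdeal {n : ℕ} {M : S} :
    M ∈ orderIdeal n ↔ ∀ i j : Fin 2, u ^ (n + i + j) ∣ (M : A) i j :=
  TwoSidedIdeal.mem_mk' ..

lemma xy_sq_mem_orderIdeal : (x * y) ^ 2 ∈ orderIdeal 4 := by
  rw [mem_orderIdeal, coe_xy_sq]
  intro i j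
  fin_cases i <;> fin_cases j <;> simp

lemma coeff_eq_zero_of_eq_X_pow_mul {φ ψ : R} {k : ℕ} (h : φ = u ^ k * ψ) {p : ℕ → Prop}
    (hφ : ∀ n, p n → coeff n φ = 0) {n : ℕ} (hn : p (n + k)) : coeff n ψ = 0 := by
  rw [← coeff_X_pow_mul ψ k n, ← h]
  exact hφ _ hn

lemma orderIdeal_four_le_span : orderIdeal 4 ≤ TwoSidedIdeal.span {(x * y) ^ 2} := by
  intro M hM
  rw [mem_orderIdeal] at hM
  obtain ⟨c00, c11, c01, c10, -⟩ := M.2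
  obtain ⟨f, hf⟩ := hM 0 0
  obtain ⟨g, hg⟩ := (pow_dvd_pow u (by norm_num : 4 ≤ 4 + 0 + 1)).trans (hM 0 1)
  obtain ⟨h, hh⟩ := (pow_dvd_pow u (by norm_num : 4 ≤ 4 + 1 + 0)).trans (hM 1 0)
  obtain ⟨e, he⟩ := hM 1 1
  have hP : !![f, g; 0, f] ∈ S := by
    refine ⟨fun n hn => ?_, fun n hn => ?_, fun n hn => ?_, fun n _ => by simp, rfl⟩
    · exact coeff_eq_zero_of_eq_X_pow_mul hf c00 (hn.add_even (by decide))
    · exact coeff_eq_zero_of_eq_X_pow_mul hf c00 (hn.add_even (by decide))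
    · exact coeff_eq_zero_of_eq_X_pow_mul hg c01 (hn.add (by decide))
  have hQ : !![0, 0; h, 0] ∈ S :=
    ⟨fun n _ => by simp, fun n _ => by simp, fun n _ => by simp,
      fun n hn => coeff_eq_zero_of_eq_X_pow_mul hh c10 (hn.add (by decide)), rfl⟩
  have hD : !![e, 0; 0, e] ∈ S :=
    ⟨fun n hn => coeff_eq_zero_of_eq_X_pow_mul he c11 (hn.add_even (by decide)),
      fun n hn => coeff_eq_zero_of_eq_X_pow_mul he c11 (hn.add_even (by decide)),
      fun n _ => by simp, fun n _ => by simp, rfl⟩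
  have hdecomp : M = (x * y) ^ 2 * ⟨_, hP⟩ + ⟨_, hQ⟩ * (x * y) ^ 2 + (y * x) ^ 3 * ⟨_, hD⟩ := by
    ext1
    simp only [AddMemClass.coe_add, MulMemClass.coe_mul, coe_xy_sq, coe_yx_cube]
    ext i j : 1
    fin_cases i <;> fin_cases j <;> simp [hf, hg, hh, he, mul_comm]
  set I := TwoSidedIdeal.span {(x * y) ^ 2}
  have hxy : (x * y) ^ 2 ∈ I := TwoSidedIdeal.subset_span rfl
  have hyx : (y * x) ^ 3 ∈ I := by
    convert I.mul_mem_right _ x (I.mul_mem_left y _ hxy) using 1; noncomm_ring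
  rw [hdecomp]
  exact I.add_mem (I.add_mem (I.mul_mem_right _ _ hxy) (I.mul_mem_left _ _ hxy))
    (I.mul_mem_right _ _ hyx)

/- For `i ≠ 0`, `e i` is the matrix whose only nonzero entry is `u ^ d` at `(r, c)`, where
`(r, c, d) = lowPosition i`; thus `lowCoeffs` is the dual basis of `e`. -/
def lowPosition : Fin 8 → Fin 2 × Fin 2 × ℕ :=
  ![(0, 0, 0), (0, 1, 1), (1, 0, 1), (0, 0, 2), (1, 1, 2), (0, 1, 3), (1, 0, 3), (1, 1, 4)]

noncomputable def lowCoeffs : S →ₗ[ℚ] Fin 8 → ℚ :=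
  LinearMap.pi fun i => coeff (lowPosition i).2.2 ∘ₗ
    Matrix.entryLinearMap ℚ R (lowPosition i).1 (lowPosition i).2.1 ∘ₗ S.val.toLinearMap

lemma lowCoeffs_apply (M : S) (i : Fin 8) :
    lowCoeffs M i = coeff (lowPosition i).2.2 ((M : A) (lowPosition i).1 (lowPosition i).2.1) :=
  rfl

lemma lowCoeffs_e (j : Fin 8) : lowCoeffs (e j) = Pi.single j 1 := by
  funext i
  rw [lowCoeffs_apply]
  fin_cases j <;> fin_cases i <;>
    simp [lowPosition, e, coe_x, coe_y, coe_xy, coe_yx, coe_xyx, coe_yxy, coe_yx_sq,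
      -SubmonoidClass.coe_pow, coeff_X, coeff_X_pow, coeff_one]

lemma lowCoeffs_sum_smul_e (c : Fin 8 → ℚ) : lowCoeffs (∑ i, c i • e i) = c := by
  simp [map_sum, lowCoeffs_e, ← pi_eq_sum_univ']

lemma lowCoeffs_eq_zero_of_mem_orderIdeal {M : S} (hM : M ∈ orderIdeal 4) : lowCoeffs M = 0 := by
  rw [mem_orderIdeal] at hM
  funext i
  rw [lowCoeffs_apply]
  exact X_pow_dvd_iff.mp (hM _ _) _ (by fin_cases i <;> decide)

lemma mem_orderIdeal_of_lowCoeffs_eq_zero {M : S} (hM : lowCoeffs M = 0) : M ∈ orderIdeal 4 := by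
  obtain ⟨c00, c11, c01, c10, hconst⟩ := M.2
  have h (k : Fin 8) := congrFun hM k
  have h11 : coeff 0 ((M : A) 1 1) = 0 := by
    rw [coeff_zero_eq_constantCoeff_apply, ← hconst, ← coeff_zero_eq_constantCoeff_apply]
    exact h 0
  rw [mem_orderIdeal]
  intro i j
  rw [X_pow_dvd_iff]
  intro m hm
  fin_cases i <;> fin_cases j <;> simp at hm <;> interval_cases m <;>
    first
    | exact c00 _ (by decide) | exact c11 _ (by decide)
    | exact c01 _ (by decide) | exact c10 _ (by decide) | exact h11
    | exact h 0 | exact h 1 | exact h 2 | exact h 3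
    | exact h 4 | exact h 5 | exact h 6 | exact h 7

lemma span_xy_sq_eq_orderIdeal : TwoSidedIdeal.span {(x * y) ^ 2} = orderIdeal 4 :=
  le_antisymm (TwoSidedIdeal.span_le.mpr (Set.singleton_subset_iff.mpr xy_sq_mem_orderIdeal))
    orderIdeal_four_le_span

theorem ideal_of_w (r : ℕ) (hr : 0 < r) :
    (y * x) ^ 2 * y ∈ TwoSidedIdeal.span {w r} ∧
    (x * y) ^ 2 * x ∈ TwoSidedIdeal.span {w r} ∧
    (x * y) ^ 2 ∈ TwoSidedIdeal.span {w r} ∧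
    TwoSidedIdeal.span {w r} = TwoSidedIdeal.span {(x * y) ^ 2} ∧
    (∀ s : ↥S, ∃ c : Fin 8 → ℚ,
      s - ∑ i, c i • e i ∈ TwoSidedIdeal.span {(x * y) ^ 2}) ∧
    (∀ c : Fin 8 → ℚ, (∑ i, c i • e i) ∈ TwoSidedIdeal.span {(x * y) ^ 2} → c = 0) := by
  have hw : w r = relator x y (r : S) := rfl
  have hc : Commute y (r : S) := (Nat.cast_commute r y).symm
  have hu : IsUnit (r : S) := by
    simpa using (Nat.cast_ne_zero.mpr hr.ne' : (r : ℚ) ≠ 0).isUnit.map (algebraMap ℚ S)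
  have hxy := sq_mem_span_relator y_mul_self hc hu (x := x)
  rw [hw, span_xy_sq_eq_orderIdeal]
  refine ⟨sq_mul_mem_span_relator y_mul_self hc hu, TwoSidedIdeal.mul_mem_right _ _ _ hxy, hxy,
    (span_relator_eq y_mul_self hc hu).trans span_xy_sq_eq_orderIdeal,
    fun s => ⟨lowCoeffs s, ?_⟩, fun c hmem => ?_⟩
  · apply mem_orderIdeal_of_lowCoeffs_eq_zero
    rw [map_sub, lowCoeffs_sum_smul_e, sub_self]
  · rw [← lowCoeffs_sum_smul_e c]
    exact lowCoeffs_eq_zero_of_mem_orderIdeal hmem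

end Stmt18
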